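/- arXiv:0808.4156 — 2 statements merged into one kernel-verified Lean document; each statement's English description precedes it below -/
import Mathlib

section
/- Block criterion for weak ergodicity: a nonhomogeneous Markov chain given by a sequence of stochastic matrices (P^{(t)})_{t≥0} on a nonempty finite state space S is weakly ergodic if and only if there exists a strictly increasing sequence of nonnegative integers n_0 < n_1 < n_2 < … such that Σ_{i=0}^∞ (1 − δ(P^{(n_i, n_{i+1})})) = ∞. -/
/-!
Dobrushin's contraction inequality `‖uP - vP‖₁ ≤ δ(P) ‖u - v‖₁` (for `Σ u = Σ v`) makes `δ`
submultiplicative on stochastic matrices, and shows that weak ergodicity amounts to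
`δ(P^{(m,k)}) → 0` as `k → ∞`, for every `m`. If that holds, consecutive blocks with coefficient
at most `1/2` make the series diverge. Conversely, `δ(P^{(n_a,n_b)}) ≤ ∏ δ_i ≤ exp (-Σ (1 - δ_i))`
tends to `0`, and `δ(P^{(m,k)})` is nonincreasing in `k`, so the whole sequence follows.
-/

open Filter

/-- The ℓ¹ distance between two vectors on a finite index set. -/
noncomputable def l1 {S : Type*} [Fintype S] (u v : S → ℝ) : ℝ :=
  ∑ k, |u k - v k|

/-- A stochastic matrix: nonnegative entries, rows summing to 1. -/
def IsStochastic {S : Type*} [Fintype S] (P : Matrix S S ℝ) : Prop :=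
  (∀ i k, 0 ≤ P i k) ∧ ∀ i, ∑ k, P i k = 1

/-- A probability distribution (row vector) on a finite state space. -/
def IsDist {S : Type*} [Fintype S] (μ : S → ℝ) : Prop :=
  (∀ k, 0 ≤ μ k) ∧ ∑ k, μ k = 1

/-- Dobrushin's ergodic coefficient: the maximum total-variation distance
between two rows of `P`. -/
noncomputable def dobrushin {S : Type*} [Fintype S] (P : Matrix S S ℝ) : ℝ :=
  ⨆ p : S × S, l1 (P p.1) (P p.2) / 2

/-- The product `P^{(n1,n2)} = P^{(n1)} P^{(n1+1)} ⋯ P^{(n2−1)}` of the transition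
matrices of a nonhomogeneous Markov chain. -/
noncomputable def Pprod {S : Type*} [Fintype S] [DecidableEq S]
    (P : ℕ → Matrix S S ℝ) (n1 n2 : ℕ) : Matrix S S ℝ :=
  ((List.range (n2 - n1)).map fun t => P (n1 + t)).prod

/-- Weak ergodicity of a nonhomogeneous Markov chain: the initial distribution
is forgotten in the limit. -/
def WeaklyErgodic {S : Type*} [Fintype S] [DecidableEq S]
    (P : ℕ → Matrix S S ℝ) : Prop :=
  ∀ μ ν : S → ℝ, IsDist μ → IsDist ν → ∀ n1 : ℕ,
    Tendsto (fun n2 => l1 (Matrix.vecMul μ (Pprod P n1 n2)) (Matrix.vecMul ν (Pprod P n1 n2)))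
      atTop (nhds 0)

open Finset Matrix

section Dobrushin

variable {S : Type*} [Fintype S]

lemma l1_nonneg (u v : S → ℝ) : 0 ≤ l1 u v :=
  sum_nonneg fun _ _ => abs_nonneg _

lemma l1_le_two {μ ν : S → ℝ} (hμ : IsDist μ) (hν : IsDist ν) : l1 μ ν ≤ 2 := by
  calc l1 μ ν ≤ ∑ k, (μ k + ν k) :=
        sum_le_sum fun k _ => (abs_sub _ _).trans_eq <| by
          rw [abs_of_nonneg (hμ.1 k), abs_of_nonneg (hν.1 k)]
    _ = 2 := by rw [sum_add_distrib, hμ.2, hν.2]; norm_num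

lemma bddAbove_range_l1_rows (P : Matrix S S ℝ) :
    BddAbove (Set.range fun p : S × S => l1 (P p.1) (P p.2) / 2) :=
  (Set.finite_range _).bddAbove

lemma l1_rows_le_two_mul_dobrushin (P : Matrix S S ℝ) (i j : S) :
    l1 (P i) (P j) ≤ 2 * dobrushin P := by
  have := le_ciSup (bddAbove_range_l1_rows P) (i, j)
  rw [dobrushin]
  linarith

lemma dobrushin_nonneg [Nonempty S] (P : Matrix S S ℝ) : 0 ≤ dobrushin P := by
  obtain ⟨i⟩ := ‹Nonempty S›
  rw [dobrushin]
  simpa [l1] using le_ciSup (bddAbove_range_l1_rows P) (i, i)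

lemma dobrushin_le_one [Nonempty S] {P : Matrix S S ℝ} (hP : IsStochastic P) :
    dobrushin P ≤ 1 :=
  ciSup_le fun p => by
    linarith [l1_le_two ⟨hP.1 p.1, hP.2 p.1⟩ ⟨hP.1 p.2, hP.2 p.2⟩]

lemma sum_mul_le_of_sum_eq_zero {ι : Type*} [Fintype ι] {w f : ι → ℝ} {D : ℝ}
    (hw : ∑ i, w i = 0) (hf : ∀ i j, f i - f j ≤ 2 * D) :
    ∑ i, w i * f i ≤ D * ∑ i, |w i| := by
  rcases isEmpty_or_nonempty ι with _ | _
  · simp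
  obtain ⟨imax, -, himax⟩ := exists_max_image univ f univ_nonempty
  obtain ⟨imin, -, himin⟩ := exists_min_image univ f univ_nonempty
  set m := (f imax + f imin) / 2 with hm
  have hdev : ∀ i, |f i - m| ≤ D := fun i =>
    abs_le.2 ⟨by linarith [himin i (mem_univ i), hf imax imin, hm],
      by linarith [himax i (mem_univ i), hf imax imin, hm]⟩
  calc ∑ i, w i * f i = ∑ i, w i * (f i - m) := by
        simp only [mul_sub, sum_sub_distrib, ← sum_mul, hw, zero_mul, sub_zero]
    _ ≤ ∑ i, |w i| * D := sum_le_sum fun i _ => (le_abs_self _).trans <| by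
        rw [abs_mul]; exact mul_le_mul_of_nonneg_left (hdev i) (abs_nonneg _)
    _ = D * ∑ i, |w i| := by rw [← sum_mul, mul_comm]

/-- Pair `(u - v) ᵥ* P` with its sign vector `s` and move `P` across: `P *ᵥ s` oscillates by at
most `2 δ(P)`, and `u - v` has total mass zero. -/
lemma l1_vecMul_le (P : Matrix S S ℝ) {u v : S → ℝ} (huv : ∑ k, u k = ∑ k, v k) :
    l1 (u ᵥ* P) (v ᵥ* P) ≤ dobrushin P * l1 u v := by
  set w := u - v
  set s : S → ℝ := fun k => SignType.sign ((w ᵥ* P) k)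
  have hw : ∑ k, w k = 0 := by simp [w, sum_sub_distrib, huv]
  have hs : ∀ k, |s k| ≤ 1 := fun k => by
    simp only [s]
    rcases SignType.sign ((w ᵥ* P) k) with _ | _ | _ <;> simp
  have hosc : ∀ i j, (P *ᵥ s) i - (P *ᵥ s) j ≤ 2 * dobrushin P := fun i j =>
    calc (P *ᵥ s) i - (P *ᵥ s) j = ∑ k, (P i k - P j k) * s k := by
          simp only [mulVec, dotProduct, sub_mul, sum_sub_distrib]
      _ ≤ ∑ k, |P i k - P j k| := sum_le_sum fun k _ => (le_abs_self _).trans <| by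
          rw [abs_mul]
          exact mul_le_of_le_one_right (abs_nonneg _) (hs k)
      _ ≤ 2 * dobrushin P := l1_rows_le_two_mul_dobrushin P i j
  calc l1 (u ᵥ* P) (v ᵥ* P) = (w ᵥ* P) ⬝ᵥ s := by
        simp only [l1, dotProduct, w, sub_vecMul, Pi.sub_apply, s, self_mul_sign]
    _ = w ⬝ᵥ (P *ᵥ s) := (dotProduct_mulVec _ _ _).symm
    _ ≤ dobrushin P * l1 u v := sum_mul_le_of_sum_eq_zero hw hosc

lemma dobrushin_mul_le [Nonempty S] {A : Matrix S S ℝ} (hA : IsStochastic A)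
    (B : Matrix S S ℝ) : dobrushin (A * B) ≤ dobrushin A * dobrushin B :=
  ciSup_le fun ⟨i, j⟩ => by
    have hrows : l1 ((A * B) i) ((A * B) j) ≤ dobrushin B * l1 (A i) (A j) :=
      l1_vecMul_le B (by rw [hA.2 i, hA.2 j])
    nlinarith [l1_rows_le_two_mul_dobrushin A i j, dobrushin_nonneg B]

end Dobrushin

lemma prod_le_exp_neg_sum_one_sub {ι : Type*} (s : Finset ι) {x : ι → ℝ}
    (hx : ∀ i ∈ s, 0 ≤ x i) : ∏ i ∈ s, x i ≤ Real.exp (-∑ i ∈ s, (1 - x i)) := by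
  rw [← sum_neg_distrib, Real.exp_sum]
  refine prod_le_prod hx fun i _ => ?_
  linarith [Real.add_one_le_exp (-(1 - x i))]

/-- Each block is chosen long enough that its coefficient is at most `1 / 2`. -/
lemma exists_strictMono_tendsto_sum_one_sub {d : ℕ → ℕ → ℝ}
    (hd : ∀ m, Tendsto (d m) atTop (nhds 0)) :
    ∃ n : ℕ → ℕ, StrictMono n ∧
      Tendsto (fun N => ∑ i ∈ range N, (1 - d (n i) (n (i + 1)))) atTop atTop := by
  have hnext : ∀ m, ∃ m', m < m' ∧ d m m' ≤ 1 / 2 := fun m =>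
    (((hd m).eventually (ge_mem_nhds (by norm_num))).and (eventually_gt_atTop m)).exists.imp
      fun _ h => ⟨h.2, h.1⟩
  choose next hlt hle using hnext
  refine ⟨fun i => next^[i] 0, strictMono_nat_of_lt_succ fun i => ?_, ?_⟩
  · rw [Function.iterate_succ_apply']
    exact hlt _
  · refine tendsto_atTop_mono (fun N => ?_)
      ((tendsto_natCast_atTop_atTop (R := ℝ)).atTop_div_const (by norm_num : (0 : ℝ) < 2))
    calc (N : ℝ) / 2 = ∑ _i ∈ range N, (1 / 2 : ℝ) := by simp; ring
      _ ≤ _ := sum_le_sum fun i _ => by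
        show 1 / 2 ≤ 1 - d (next^[i] 0) (next^[i + 1] 0)
        rw [Function.iterate_succ_apply']
        linarith [hle (next^[i] 0)]

section Pprod

variable {S : Type*} [Fintype S] [DecidableEq S]

lemma isStochastic_iff_mem_rowStochastic {A : Matrix S S ℝ} :
    IsStochastic A ↔ A ∈ rowStochastic ℝ S :=
  mem_rowStochastic_iff_sum.symm

variable {P : ℕ → Matrix S S ℝ}

lemma isStochastic_Pprod (hP : ∀ t, IsStochastic (P t)) (m n : ℕ) :
    IsStochastic (Pprod P m n) :=
  isStochastic_iff_mem_rowStochastic.2 <| Submonoid.list_prod_mem _ fun A hA => by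
    obtain ⟨t, -, rfl⟩ := List.mem_map.1 hA
    exact isStochastic_iff_mem_rowStochastic.1 (hP _)

lemma Pprod_mul {a b c : ℕ} (hab : a ≤ b) (hbc : b ≤ c) :
    Pprod P a b * Pprod P b c = Pprod P a c := by
  obtain ⟨k, rfl⟩ := Nat.exists_eq_add_of_le hab
  obtain ⟨l, rfl⟩ := Nat.exists_eq_add_of_le hbc
  simp only [Pprod, show a + k + l - a = k + l by omega, show a + k - a = k by omega,
    Nat.add_sub_cancel_left, List.range_add, List.map_append, List.map_map, List.prod_append]
  congr 3
  funext t
  simp [add_assoc]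

variable [Nonempty S] (hP : ∀ t, IsStochastic (P t))
include hP

lemma dobrushin_Pprod_le_left {m m' n : ℕ} (hm : m ≤ m') (hm' : m' ≤ n) :
    dobrushin (Pprod P m n) ≤ dobrushin (Pprod P m' n) := by
  rw [← Pprod_mul hm hm']
  refine (dobrushin_mul_le (isStochastic_Pprod hP _ _) _).trans ?_
  exact mul_le_of_le_one_left (dobrushin_nonneg _) (dobrushin_le_one (isStochastic_Pprod hP _ _))

lemma dobrushin_Pprod_le_right {m n n' : ℕ} (hn : m ≤ n) (hn' : n ≤ n') :
    dobrushin (Pprod P m n') ≤ dobrushin (Pprod P m n) := by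
  rw [← Pprod_mul hn hn']
  refine (dobrushin_mul_le (isStochastic_Pprod hP _ _) _).trans ?_
  exact mul_le_of_le_one_right (dobrushin_nonneg _) (dobrushin_le_one (isStochastic_Pprod hP _ _))

lemma dobrushin_Pprod_le_prod {n : ℕ → ℕ} (hn : Monotone n) {a b : ℕ} (hab : a ≤ b) :
    dobrushin (Pprod P (n a) (n b)) ≤ ∏ i ∈ Ico a b, dobrushin (Pprod P (n i) (n (i + 1))) := by
  induction b, hab using Nat.le_induction with
  | base => simpa using dobrushin_le_one (isStochastic_Pprod hP _ _)
  | succ b hab ih =>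
    rw [prod_Ico_succ_top hab, ← Pprod_mul (hn hab) (hn b.le_succ)]
    exact (dobrushin_mul_le (isStochastic_Pprod hP _ _) _).trans
      (mul_le_mul_of_nonneg_right ih (dobrushin_nonneg _))

lemma tendsto_dobrushin_Pprod_of_tendsto_sum {n : ℕ → ℕ} (hn : StrictMono n)
    (hsum : Tendsto (fun N => ∑ i ∈ range N, (1 - dobrushin (Pprod P (n i) (n (i + 1)))))
      atTop atTop) (m : ℕ) :
    Tendsto (fun k => dobrushin (Pprod P m k)) atTop (nhds 0) := by
  set σ := fun N => ∑ i ∈ range N, (1 - dobrushin (Pprod P (n i) (n (i + 1))))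
  have hblock : ∀ b ≥ m, dobrushin (Pprod P (n m) (n b)) ≤ Real.exp (σ m - σ b) := fun b hb =>
    calc _ ≤ _ := dobrushin_Pprod_le_prod hP hn.monotone hb
      _ ≤ _ := prod_le_exp_neg_sum_one_sub _ fun i _ => dobrushin_nonneg _
      _ = _ := by rw [sum_Ico_eq_sub _ hb, neg_sub]
  have hexp : Tendsto (fun b => Real.exp (σ m - σ b)) atTop (nhds 0) :=
    Real.tendsto_exp_atBot.comp (tendsto_atBot_add_const_left _ _ (tendsto_neg_atBot_iff.2 hsum))
  refine tendsto_order.2 ⟨fun ε hε => Eventually.of_forall fun k =>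
    hε.trans_le (dobrushin_nonneg _), fun ε hε => ?_⟩
  obtain ⟨b, hb, hbε⟩ := ((eventually_ge_atTop m).and (hexp.eventually (gt_mem_nhds hε))).exists
  have hmb : m ≤ n m := hn.le_apply
  filter_upwards [eventually_ge_atTop (n b)] with k hk
  calc dobrushin (Pprod P m k) ≤ dobrushin (Pprod P m (n b)) :=
        dobrushin_Pprod_le_right hP (hmb.trans (hn.monotone hb)) hk
    _ ≤ dobrushin (Pprod P (n m) (n b)) := dobrushin_Pprod_le_left hP hmb (hn.monotone hb)
    _ < ε := (hblock b hb).trans_lt hbε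

end Pprod

lemma isDist_single {S : Type*} [Fintype S] [DecidableEq S] (i : S) :
    IsDist (Pi.single i 1 : S → ℝ) :=
  ⟨fun k => by by_cases h : k = i <;> simp [h], by simp⟩

lemma weaklyErgodic_iff_forall_tendsto_dobrushin {S : Type*} [Fintype S] [Nonempty S]
    [DecidableEq S] {P : ℕ → Matrix S S ℝ} :
    WeaklyErgodic P ↔ ∀ m, Tendsto (fun k => dobrushin (Pprod P m k)) atTop (nhds 0) := by
  constructor
  · intro hwe m
    have hrows : ∀ p : S × S,
        Tendsto (fun k => l1 (Pprod P m k p.1) (Pprod P m k p.2) / 2) atTop (nhds 0) :=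
      fun ⟨i, j⟩ => by
        simpa only [single_one_vecMul, row_def, zero_div] using
          (hwe _ _ (isDist_single i) (isDist_single j) m).div_const 2
    refine squeeze_zero (fun _ => dobrushin_nonneg _) (fun k => ciSup_le fun p => ?_)
      (by simpa using tendsto_finsetSum univ fun p _ => hrows p)
    exact single_le_sum (f := fun p : S × S => l1 (Pprod P m k p.1) (Pprod P m k p.2) / 2)
      (fun p _ => div_nonneg (l1_nonneg _ _) zero_le_two) (mem_univ p)
  · intro h μ ν hμ hν m
    refine squeeze_zero (fun _ => l1_nonneg _ _) (fun k => ?_)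
      (by simpa using (h m).const_mul 2)
    calc l1 (μ ᵥ* Pprod P m k) (ν ᵥ* Pprod P m k)
        ≤ dobrushin (Pprod P m k) * l1 μ ν := l1_vecMul_le _ (by rw [hμ.2, hν.2])
      _ ≤ 2 * dobrushin (Pprod P m k) := by
        nlinarith [l1_le_two hμ hν, dobrushin_nonneg (Pprod P m k)]

/-- Block criterion for weak ergodicity: a nonhomogeneous Markov chain is weakly
ergodic iff there is a strictly increasing sequence of block endpoints `n_i` with
`Σ_i (1 − δ(P^{(n_i, n_{i+1})})) = ∞`. -/
theorem weaklyErgodic_iff_block_criterion {S : Type*} [Fintype S] [Nonempty S]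
    [DecidableEq S] (P : ℕ → Matrix S S ℝ) (hP : ∀ t, IsStochastic (P t)) :
    WeaklyErgodic P ↔
      ∃ n : ℕ → ℕ, StrictMono n ∧
        Tendsto (fun N => ∑ i ∈ Finset.range N, (1 - dobrushin (Pprod P (n i) (n (i + 1)))))
          atTop atTop := by
  rw [weaklyErgodic_iff_forall_tendsto_dobrushin]
  exact ⟨exists_strictMono_tendsto_sum_one_sub,
    fun ⟨_, hn, hsum⟩ => tendsto_dobrushin_Pprod_of_tendsto_sum hP hn hsum⟩
end

section
/- Let (β_t)_{t≥0} be any sequence of nonnegative reals and set P^{(t)} = P_{β_t}. For j ≥ 0 let β̄_j = (1/n) Σ_{t=jn}^{(j+1)n−1} β_t and let ε_n = ln n − (ln n!)/n (natural logarithms). Then for every j ≥ 0: (i) P^{(jn,(j+1)n)}(u,v) ≥ e^{−n(β̄_j Δ + ε_n)}/|A|ⁿ for every pair u, v ∈ Aⁿ, and (ii) the Dobrushin ergodic coefficient satisfies δ(P^{(jn,(j+1)n)}) ≤ 1 − e^{−n(β̄_j Δ + ε_n)}. -/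
open Filter

/-- The Gibbs-sampler (heat bath) transition matrix at inverse temperature `β`
for the energy `E` on the state space `Fin n → A`: a coordinate `i` is chosen
uniformly at random and resampled from the conditional Boltzmann distribution. -/
noncomputable def gibbs {A : Type*} [Fintype A] [DecidableEq A]
    (n : ℕ) (E : (Fin n → A) → ℝ) (β : ℝ) :
    Matrix (Fin n → A) (Fin n → A) ℝ := fun u v =>
  (∑ i : Fin n,
    if ∀ j, j ≠ i → v j = u j then
      Real.exp (-β * E v) / ∑ b : A, Real.exp (-β * E (Function.update u i b))
    else 0) / n

/-- The maximal change of the energy `E` when a single coordinate is modified. -/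
noncomputable def energySpan {A : Type*} [Fintype A] [DecidableEq A]
    (n : ℕ) (E : (Fin n → A) → ℝ) : ℝ :=
  ⨆ q : (Fin n → A) × Fin n × A × A,
    |E (Function.update q.1 q.2.1 q.2.2.1) - E (Function.update q.1 q.2.1 q.2.2.2)|

/-!
Within a block of `n` steps the chain can go from `u` to `v` by resampling the `n` sites one at a
time, in any of the `n!` orders. A Gibbs step picks a prescribed site with probability `1/n` and,
since changing one site changes the energy by at most `Δ`, resamples it to a prescribed value
with probability at least `e^{-β_t Δ}/|A|`. Hence every entry of the block product is at least
`n! ∏_t e^{-β_t Δ}/(n|A|) = e^{-n(β̄_j Δ + ε_n)}/|A|ⁿ`, and a stochastic matrix on `S` whose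
entries are all at least `ε` has rows at total-variation distance at most `1 - |S| ε`.
-/

open Finset Matrix

section Pprod

variable {S : Type*} [Fintype S] [DecidableEq S]

lemma Pprod_self (P : ℕ → Matrix S S ℝ) (m : ℕ) : Pprod P m m = 1 := by
  simp [Pprod]

lemma Pprod_eq_mul_Pprod_succ (P : ℕ → Matrix S S ℝ) {m k : ℕ} (h : m < k) :
    Pprod P m k = P m * Pprod P (m + 1) k := by
  obtain ⟨d, rfl⟩ : ∃ d, k = m + 1 + d := ⟨k - (m + 1), by omega⟩
  rw [Pprod, Pprod, show m + 1 + d - m = d + 1 by omega, show m + 1 + d - (m + 1) = d by omega,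
    List.range_succ_eq_map, List.map_cons, List.prod_cons, List.map_map]
  congr 3
  funext t
  simp only [Function.comp_apply, add_assoc, add_comm 1]

lemma Pprod_mem_rowStochastic {P : ℕ → Matrix S S ℝ} (hP : ∀ t, P t ∈ rowStochastic ℝ S)
    (m k : ℕ) : Pprod P m k ∈ rowStochastic ℝ S :=
  Submonoid.list_prod_mem _ <| by simp [hP]

lemma dobrushin_le_one_sub_card_mul [Nonempty S] {P : Matrix S S ℝ}
    (hP : P ∈ rowStochastic ℝ S) {ε : ℝ} (hε : ∀ u v, ε ≤ P u v) :
    dobrushin P ≤ 1 - Fintype.card S * ε := by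
  refine ciSup_le fun ⟨u, u'⟩ => ?_
  have hrow := sum_row_of_mem_rowStochastic hP
  calc l1 (P u) (P u') / 2
      = (∑ k, |P u k - P u' k|) / 2 := rfl
    _ ≤ (∑ k, (P u k + P u' k - 2 * ε)) / 2 := by
        gcongr with k
        rw [abs_sub_le_iff]
        constructor <;> linarith [hε u k, hε u' k]
    _ = 1 - Fintype.card S * ε := by
        rw [sum_sub_distrib, sum_add_distrib, hrow, hrow, sum_const, card_univ, nsmul_eq_mul]
        ring

end Pprod

section Gibbs

variable {A : Type*} [Fintype A] {n : ℕ} {E : (Fin n → A) → ℝ}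

lemma sum_exp_update_pos (β : ℝ) (w : Fin n → A) (i : Fin n) :
    0 < ∑ b : A, Real.exp (-β * E (Function.update w i b)) :=
  sum_pos (fun _ _ => Real.exp_pos _) ⟨w i, mem_univ _⟩

variable [DecidableEq A]

lemma abs_sub_le_energySpan (w : Fin n → A) (i : Fin n) (a b : A) :
    |E (Function.update w i a) - E (Function.update w i b)| ≤ energySpan n E := by
  unfold energySpan
  exact le_ciSup (f := fun q : (Fin n → A) × Fin n × A × A =>
      |E (Function.update q.1 q.2.1 q.2.2.1) - E (Function.update q.1 q.2.1 q.2.2.2)|)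
    (Finite.bddAbove_range _) ⟨w, i, a, b⟩

lemma gibbs_mem_rowStochastic (hn : 0 < n) (E : (Fin n → A) → ℝ) (β : ℝ) :
    gibbs n E β ∈ rowStochastic ℝ (Fin n → A) := by
  refine mem_rowStochastic_iff_sum.2 ⟨fun u v => ?_, fun u => ?_⟩
  · refine div_nonneg (sum_nonneg fun i _ => ?_) n.cast_nonneg
    split_ifs
    exacts [div_nonneg (Real.exp_pos _).le (sum_exp_update_pos β u i).le, le_rfl]
  have hsite : ∀ i : Fin n, ∑ v : Fin n → A, (if ∀ j, j ≠ i → v j = u j then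
      Real.exp (-β * E v) / ∑ b : A, Real.exp (-β * E (Function.update u i b)) else 0) = 1 := by
    intro i
    have himage : univ.filter (fun v : Fin n → A => ∀ j, j ≠ i → v j = u j) =
        univ.image (Function.update u i) := by
      ext v
      simp [Function.eq_update_iff, eq_comm]
    rw [← sum_filter, himage, sum_image fun a _ b _ h => Function.update_injective u i h,
      ← sum_div, div_self (sum_exp_update_pos β u i).ne']
  simp only [gibbs]
  rw [← sum_div, sum_comm, sum_congr rfl fun i _ => hsite i, sum_const, card_univ,
    Fintype.card_fin, nsmul_one, div_self (Nat.cast_pos.2 hn).ne']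

noncomputable def gibbsFloor (n : ℕ) (E : (Fin n → A) → ℝ) (β : ℝ) : ℝ :=
  Real.exp (-β * energySpan n E) / (n * Fintype.card A)

lemma exp_neg_mul_energySpan_div_card_le {β : ℝ} (hβ : 0 ≤ β) {w w' : Fin n → A} {i : Fin n}
    (h : ∀ j, j ≠ i → w' j = w j) :
    Real.exp (-β * energySpan n E) / Fintype.card A ≤
      Real.exp (-β * E w') / ∑ b : A, Real.exp (-β * E (Function.update w i b)) := by
  have hcard : (0 : ℝ) < Fintype.card A := Nat.cast_pos.2 (Fintype.card_pos_iff.2 ⟨w i⟩)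
  rw [div_le_div_iff₀ hcard (sum_exp_update_pos β w i), mul_sum]
  have hw' : Function.update w i (w' i) = w' :=
    Function.update_eq_iff.2 ⟨rfl, fun j hj => (h j hj).symm⟩
  calc ∑ b : A, Real.exp (-β * energySpan n E) * Real.exp (-β * E (Function.update w i b))
      ≤ ∑ _b : A, Real.exp (-β * E w') := by
        gcongr with b
        rw [← Real.exp_add, Real.exp_le_exp]
        have hΔ := (abs_le.1 (abs_sub_le_energySpan (E := E) w i (w' i) b)).2
        rw [hw'] at hΔ
        nlinarith
    _ = Real.exp (-β * E w') * Fintype.card A := by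
        rw [sum_const, card_univ, nsmul_eq_mul, mul_comm]

lemma card_mul_gibbsFloor_le_gibbs {β : ℝ} (hβ : 0 ≤ β) {w w' : Fin n → A} {F : Finset (Fin n)}
    (hF : ∀ i ∈ F, ∀ j, j ≠ i → w' j = w j) :
    F.card * gibbsFloor n E β ≤ gibbs n E β w w' := by
  have hterm_nonneg : ∀ i : Fin n, 0 ≤ (if ∀ j, j ≠ i → w' j = w j then
      Real.exp (-β * E w') / ∑ b : A, Real.exp (-β * E (Function.update w i b)) else 0) := by
    intro i
    split_ifs
    exacts [div_nonneg (Real.exp_pos _).le (sum_exp_update_pos β w i).le, le_rfl]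
  calc F.card * gibbsFloor n E β
      = (∑ _i ∈ F, Real.exp (-β * energySpan n E) / Fintype.card A) / n := by
        rw [gibbsFloor, sum_const, nsmul_eq_mul]
        ring
    _ ≤ (∑ i ∈ F, if ∀ j, j ≠ i → w' j = w j then
          Real.exp (-β * E w') / ∑ b : A, Real.exp (-β * E (Function.update w i b))
          else 0) / n := by
        gcongr with i hi
        rw [if_pos (hF i hi)]
        exact exp_neg_mul_energySpan_div_card_le hβ (hF i hi)
    _ ≤ gibbs n E β w w' :=
        div_le_div_of_nonneg_right
          (sum_le_sum_of_subset_of_nonneg (subset_univ F) fun i _ _ => hterm_nonneg i) n.cast_nonneg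

lemma sum_gibbsFloor_mul_le_gibbs_mulVec {β : ℝ} (hβ : 0 ≤ β) {x : (Fin n → A) → ℝ}
    (hx : ∀ w, 0 ≤ x w) (w : Fin n → A) (b : Fin n → A) :
    ∑ i, gibbsFloor n E β * x (Function.update w i (b i)) ≤ (gibbs n E β *ᵥ x) w := by
  set g : Fin n → Fin n → A := fun i => Function.update w i (b i)
  calc ∑ i, gibbsFloor n E β * x (g i)
      = ∑ w', ∑ i ∈ univ.filter (fun i => g i = w'), gibbsFloor n E β * x w' := by
        rw [← sum_fiberwise univ g]
        refine sum_congr rfl fun w' _ => sum_congr rfl fun i hi => ?_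
        rw [(mem_filter.1 hi).2]
    _ ≤ ∑ w', gibbs n E β w w' * x w' := by
        refine sum_le_sum fun w' _ => ?_
        rw [sum_const, nsmul_eq_mul, ← mul_assoc]
        refine mul_le_mul_of_nonneg_right
          (card_mul_gibbsFloor_le_gibbs hβ fun i hi j hj => ?_) (hx w')
        rw [← (mem_filter.1 hi).2]
        exact Function.update_of_ne hj _ _

lemma factorial_mul_prod_gibbsFloor_le_Pprod (hn : 0 < n) {β : ℕ → ℝ} (hβ : ∀ t, 0 ≤ β t)
    (k m : ℕ) {T : Finset (Fin n)} (hT : T.card = k) {w v : Fin n → A}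
    (hw : ∀ i ∉ T, w i = v i) :
    (k.factorial : ℝ) * ∏ t ∈ range k, gibbsFloor n E (β (m + t)) ≤
      Pprod (fun t => gibbs n E (β t)) m (m + k) w v := by
  induction k generalizing m T w with
  | zero =>
    obtain rfl : w = v := funext fun i => hw i (by simp [card_eq_zero.1 hT])
    simp [Pprod_self]
  | succ k ih =>
    set N := Pprod (fun t => gibbs n E (β t)) (m + 1) (m + 1 + k)
    have hN : ∀ w', 0 ≤ N w' v := fun w' => nonneg_of_mem_rowStochastic
      (Pprod_mem_rowStochastic (fun t => gibbs_mem_rowStochastic hn E (β t)) _ _)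
    have hfloor : ∀ t, 0 ≤ gibbsFloor n E (β t) := fun t => by unfold gibbsFloor; positivity
    -- first resample some `i ∈ T` to `v i`, then fill in `T.erase i` by induction
    have hstep : ∀ i ∈ T, (k.factorial : ℝ) * ∏ t ∈ range k, gibbsFloor n E (β (m + 1 + t)) ≤
        N (Function.update w i (v i)) v := by
      intro i hi
      refine ih (m + 1) (by rw [card_erase_of_mem hi, hT]; rfl) fun j hj => ?_
      by_cases hji : j = i
      · simp [hji]
      · rw [Function.update_of_ne hji]
        exact hw j fun hjT => hj (mem_erase.2 ⟨hji, hjT⟩)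
    calc ((k + 1).factorial : ℝ) * ∏ t ∈ range (k + 1), gibbsFloor n E (β (m + t))
        = ∑ _i ∈ T, gibbsFloor n E (β m) *
            ((k.factorial : ℝ) * ∏ t ∈ range k, gibbsFloor n E (β (m + 1 + t))) := by
          simp only [prod_range_succ', sum_const, hT, nsmul_eq_mul, Nat.factorial_succ,
            Nat.cast_mul, add_zero, add_assoc, add_comm 1]
          push_cast
          ring
      _ ≤ ∑ i ∈ T, gibbsFloor n E (β m) * N (Function.update w i (v i)) v :=
          sum_le_sum fun i hi => mul_le_mul_of_nonneg_left (hstep i hi) (hfloor m)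
      _ ≤ ∑ i, gibbsFloor n E (β m) * N (Function.update w i (v i)) v :=
          sum_le_sum_of_subset_of_nonneg (subset_univ T)
            fun i _ _ => mul_nonneg (hfloor m) (hN _)
      _ ≤ (gibbs n E (β m) *ᵥ fun w' => N w' v) w :=
          sum_gibbsFloor_mul_le_gibbs_mulVec (hβ m) hN w v
      _ = Pprod (fun t => gibbs n E (β t)) m (m + (k + 1)) w v := by
          rw [Pprod_eq_mul_Pprod_succ _ (by omega), show m + (k + 1) = m + 1 + k by omega]
          rfl

lemma factorial_mul_prod_gibbsFloor [Nonempty A] (hn : 0 < n) (b : ℕ → ℝ) :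
    (n.factorial : ℝ) * ∏ t ∈ range n, gibbsFloor n E (b t) =
      Real.exp (-(n : ℝ) * ((∑ t ∈ range n, b t) / n * energySpan n E +
        (Real.log n - Real.log n.factorial / n))) / Fintype.card A ^ n := by
  have hn' : (n : ℝ) ≠ 0 := Nat.cast_ne_zero.2 hn.ne'
  have hexponent : -(n : ℝ) * ((∑ t ∈ range n, b t) / n * energySpan n E +
      (Real.log n - Real.log n.factorial / n)) =
      ∑ t ∈ range n, -b t * energySpan n E + (Real.log n.factorial - n * Real.log n) := by
    rw [← sum_mul, sum_neg_distrib]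
    field_simp
    ring
  rw [hexponent, Real.exp_add, Real.exp_sub, Real.exp_sum, Real.exp_nat_mul,
    Real.exp_log (Nat.cast_pos.2 n.factorial_pos), Real.exp_log (Nat.cast_pos.2 hn)]
  simp only [gibbsFloor, prod_div_distrib, prod_const, card_range, mul_pow]
  field_simp
  simp only [mul_comm]

end Gibbs

/-- Lower bound on the `n`-step block transition probabilities of the simulated
annealing chain, and the resulting upper bound on its Dobrushin ergodic
coefficient: with `β̄_j = (1/n) Σ_{t=jn}^{(j+1)n−1} β_t` and
`ε_n = ln n − (ln n!)/n`, every entry of `P^{(jn,(j+1)n)}` is at least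
`e^{−n(β̄_j Δ + ε_n)}/|A|ⁿ`, whence `δ(P^{(jn,(j+1)n)}) ≤ 1 − e^{−n(β̄_j Δ + ε_n)}`. -/
theorem gibbs_block_bound {A : Type*} [Fintype A] [DecidableEq A] [Nonempty A]
    (n : ℕ) (hn : 0 < n) (E : (Fin n → A) → ℝ)
    (β : ℕ → ℝ) (hβ : ∀ t, 0 ≤ β t) (j : ℕ) :
    (∀ u v : Fin n → A,
      Real.exp (-(n : ℝ) *
          ((∑ t ∈ Finset.Ico (j * n) ((j + 1) * n), β t) / n * energySpan n E +
            (Real.log n - Real.log (Nat.factorial n) / n))) / (Fintype.card A : ℝ) ^ n ≤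
        Pprod (fun t => gibbs n E (β t)) (j * n) ((j + 1) * n) u v) ∧
    dobrushin (Pprod (fun t => gibbs n E (β t)) (j * n) ((j + 1) * n)) ≤
      1 - Real.exp (-(n : ℝ) *
          ((∑ t ∈ Finset.Ico (j * n) ((j + 1) * n), β t) / n * energySpan n E +
            (Real.log n - Real.log (Nat.factorial n) / n))) := by
  rw [add_one_mul, sum_Ico_eq_sum_range, Nat.add_sub_cancel_left,
    ← factorial_mul_prod_gibbsFloor hn]
  have hlower : ∀ u v : Fin n → A,
      (n.factorial : ℝ) * ∏ t ∈ range n, gibbsFloor n E (β (j * n + t)) ≤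
        Pprod (fun t => gibbs n E (β t)) (j * n) (j * n + n) u v := fun u v =>
    factorial_mul_prod_gibbsFloor_le_Pprod hn hβ n (j * n) (card_fin n) (by simp)
  refine ⟨hlower, ?_⟩
  have hblock := dobrushin_le_one_sub_card_mul
    (Pprod_mem_rowStochastic (fun t => gibbs_mem_rowStochastic hn E (β t)) _ _) hlower
  rwa [factorial_mul_prod_gibbsFloor hn, Fintype.card_fun, Fintype.card_fin, Nat.cast_pow,
    mul_div_cancel₀ _ (by positivity)] at hblock
end
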